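/- arXiv:1311.3468 — 5 statements merged into one kernel-verified Lean document; each statement's English description precedes it below -/
import Mathlib

section
/- Let W ⊆ [0,∞) be a set such that W ∩ [0,R] is finite for every R > 0, and define its central density D(W) = limsup_{R→∞} |W ∩ [0,R]|/R. Let η > 0 and q ∈ ℕ, q ≥ 1. If D(W) > η/π, then for every R_0 > 0 there exists R ≥ R_0 such that the finite set S = W ∩ [0,R] satisfies ω_{2q,η}(S) > 0. -/
set_option maxHeartbeats 1000000


/-- The minimal number of closed intervals of length `ε` needed to cover `S`
(the `ε`-covering number `M(ε, S)`). -/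
noncomputable def coveringNumber (ε : ℝ) (S : Set ℝ) : ℕ :=
  sInf {n : ℕ | ∃ c : Fin n → ℝ, S ⊆ ⋃ i, Set.Icc (c i) (c i + ε)}

/-- `M(N, λ, R) = N² - 1 + ⌊λR/π⌋`. -/
noncomputable def MBound (N : ℕ) (lam R : ℝ) : ℝ :=
  (N : ℝ) ^ 2 - 1 + ⌊lam * R / Real.pi⌋

/-- The `(N, λ)`-metric span of `S`:
`ω_{N,λ}(S) = max {0, sup_{ε>0} ε (M(ε,S) - M(N,λ,R(S)))}`, where `R(S) = sup S`. -/
noncomputable def metricSpan (N : ℕ) (lam : ℝ) (S : Set ℝ) : ℝ :=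
  max 0 (sSup {x : ℝ | ∃ ε > 0,
    x = ε * ((coveringNumber ε S : ℝ) - MBound N lam (sSup S))})

/-- A finite set of reals has a positive separation. -/
private lemma exists_sep {S : Set ℝ} (hS : S.Finite) :
    ∃ ε > 0, ∀ x ∈ S, ∀ y ∈ S, x ≠ y → ε < |x - y| := by
  classical
  set D : Finset ℝ := ((hS.toFinset ×ˢ hS.toFinset).filter fun p => p.1 ≠ p.2).image
    (fun p => |p.1 - p.2|) with hD
  have hmem : ∀ x ∈ S, ∀ y ∈ S, x ≠ y → |x - y| ∈ D := by
    intro x hx y hy hxy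
    simp only [hD, Finset.mem_image, Finset.mem_filter, Finset.mem_product, hS.mem_toFinset]
    exact ⟨(x, y), ⟨⟨hx, hy⟩, hxy⟩, rfl⟩
  by_cases h : D.Nonempty
  · have hpos : 0 < D.min' h := by
      have hm := D.min'_mem h
      simp only [hD, Finset.mem_image, Finset.mem_filter] at hm
      obtain ⟨p, ⟨_, hp⟩, he⟩ := hm
      rw [← he]
      exact abs_pos.2 (sub_ne_zero.2 hp)
    refine ⟨D.min' h / 2, by linarith, fun x hx y hy hxy => ?_⟩
    have h1 := D.min'_le _ (hmem x hx y hy hxy)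
    linarith
  · exact ⟨1, one_pos, fun x hx y hy hxy => absurd ⟨_, hmem x hx y hy hxy⟩ h⟩

/-- A basic covering of `S ⊆ [0,R]` by intervals of length `ε`. -/
private lemma cov_mem {ε R : ℝ} (hε : 0 < ε) {S : Set ℝ} (hS : S ⊆ Set.Icc 0 R) :
    (⌈R / ε⌉₊ + 1) ∈ {n : ℕ | ∃ c : Fin n → ℝ, S ⊆ ⋃ i, Set.Icc (c i) (c i + ε)} := by
  refine ⟨fun i => (i : ℝ) * ε, fun s hs => ?_⟩
  obtain ⟨hs0, hsR⟩ := hS hs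
  have hdiv : 0 ≤ s / ε := div_nonneg hs0 hε.le
  have hlt : ⌊s / ε⌋₊ < ⌈R / ε⌉₊ + 1 := by
    have h1 : (⌊s / ε⌋₊ : ℝ) ≤ R / ε :=
      le_trans (Nat.floor_le hdiv) (by gcongr)
    exact Nat.lt_succ_of_le (Nat.cast_le.mp (h1.trans (Nat.le_ceil _)))
  have hfl : (⌊s / ε⌋₊ : ℝ) * ε ≤ s := by
    have h := mul_le_mul_of_nonneg_right (Nat.floor_le hdiv) hε.le
    rwa [div_mul_cancel₀ _ hε.ne'] at h
  have hfu : s ≤ (⌊s / ε⌋₊ : ℝ) * ε + ε := by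
    have h := mul_le_mul_of_nonneg_right (Nat.lt_floor_add_one (s / ε)).le hε.le
    rw [div_mul_cancel₀ _ hε.ne'] at h
    nlinarith
  exact Set.mem_iUnion.2 ⟨⟨⌊s / ε⌋₊, hlt⟩, hfl, hfu⟩

/-- If intervals of length `ε` can contain at most one point of the finite set `S`,
then the covering number is at least the cardinality of `S`. -/
private lemma ncard_le_cov {S : Set ℝ} (hS : S.Finite) {ε : ℝ}
    (hne : {n : ℕ | ∃ c : Fin n → ℝ, S ⊆ ⋃ i, Set.Icc (c i) (c i + ε)}.Nonempty)
    (hsep : ∀ x ∈ S, ∀ y ∈ S, x ≠ y → ε < |x - y|) :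
    S.ncard ≤ coveringNumber ε S := by
  classical
  set m := coveringNumber ε S with hm
  have hmmem : m ∈ {n : ℕ | ∃ c : Fin n → ℝ, S ⊆ ⋃ i, Set.Icc (c i) (c i + ε)} :=
    Nat.sInf_mem hne
  obtain ⟨c, hc⟩ := hmmem
  rcases S.eq_empty_or_nonempty with h | ⟨s0, hs0⟩
  · simp [h]
  haveI : Nonempty (Fin m) := by
    obtain ⟨i, _⟩ := Set.mem_iUnion.1 (hc hs0)
    exact ⟨i⟩
  set f : ℝ → Fin m := fun x =>
    if h : ∃ i, x ∈ Set.Icc (c i) (c i + ε) then h.choose else Classical.arbitrary _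
    with hf
  have key : ∀ x ∈ S, x ∈ Set.Icc (c (f x)) (c (f x) + ε) := by
    intro x hx
    have h : ∃ i, x ∈ Set.Icc (c i) (c i + ε) := Set.mem_iUnion.1 (hc hx)
    simp only [hf, dif_pos h]
    exact h.choose_spec
  have hle : S.ncard ≤ (Set.univ : Set (Fin m)).ncard := by
    refine Set.ncard_le_ncard_of_injOn f (fun a _ => trivial) ?_ Set.finite_univ
    intro x hx y hy hxy
    by_contra hne2
    have h1 := key x hx
    have h2 := key y hy
    rw [hxy] at h1
    have h3 := hsep x hx y hy hne2
    have h4 : |x - y| ≤ ε := abs_sub_le_iff.2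
      ⟨by linarith [h1.1, h1.2, h2.1, h2.2], by linarith [h1.1, h1.2, h2.1, h2.2]⟩
    linarith
  simpa [Set.ncard_univ, Nat.card_eq_fintype_card] using hle

/-- If the central density `D(W) = limsup_{R→∞} |W ∩ [0,R]|/R` of a discrete set
`W ⊆ [0,∞)` exceeds `η/π`, then there are arbitrarily large `R` for which the finite
sampling set `S = W ∩ [0,R]` has positive `(2q, η)`-metric span. -/
theorem stmt3
    (W : Set ℝ) (hW : W ⊆ Set.Ici 0)
    (hfin : ∀ R : ℝ, 0 < R → (W ∩ Set.Icc 0 R).Finite)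
    (η : ℝ) (hη : 0 < η) (q : ℕ) (hq : 1 ≤ q)
    (hD : η / Real.pi <
      Filter.limsup (fun R : ℝ => ((W ∩ Set.Icc 0 R).ncard : ℝ) / R) Filter.atTop) :
    ∀ R0 : ℝ, 0 < R0 → ∃ R : ℝ, R0 ≤ R ∧
      0 < metricSpan (2 * q) η (W ∩ Set.Icc 0 R) := by
  classical
  intro R0 hR0
  have hπ : 0 < Real.pi := Real.pi_pos
  set u : ℝ → ℝ := fun R => ((W ∩ Set.Icc 0 R).ncard : ℝ) / R with hu
  set L := Filter.limsup u Filter.atTop with hL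
  set cM : ℝ := (η / Real.pi + L) / 2 with hcM
  have hηπ : 0 < η / Real.pi := div_pos hη hπ
  have hcM1 : η / Real.pi < cM := by rw [hcM]; linarith
  have hcM2 : cM < L := by rw [hcM]; linarith
  have hcb : Filter.IsCoboundedUnder (· ≤ ·) Filter.atTop u :=
    Filter.isCoboundedUnder_le_of_eventually_le Filter.atTop (x := 0)
      (Filter.eventually_atTop.2 ⟨1, fun R hR => by positivity⟩)
  have hfreq := Filter.frequently_lt_of_lt_limsup hcb hcM2
  have hc0 : 0 < cM - η / Real.pi := by linarith
  obtain ⟨R, hRge, hRu⟩ := (Filter.frequently_atTop.1 hfreq)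
    (max (max R0 1) ((4 * (q : ℝ) ^ 2) / (cM - η / Real.pi)))
  have hR1 : (1 : ℝ) ≤ R := le_trans (le_trans (le_max_right R0 1) (le_max_left _ _)) hRge
  have hRpos : 0 < R := lt_of_lt_of_le one_pos hR1
  have hRbig : 4 * (q : ℝ) ^ 2 ≤ (cM - η / Real.pi) * R := by
    have h1 : (4 * (q : ℝ) ^ 2) / (cM - η / Real.pi) ≤ R :=
      le_trans (le_max_right _ _) hRge
    calc 4 * (q : ℝ) ^ 2 = (4 * (q : ℝ) ^ 2) / (cM - η / Real.pi) * (cM - η / Real.pi) :=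
          (div_mul_cancel₀ _ hc0.ne').symm
      _ ≤ R * (cM - η / Real.pi) := mul_le_mul_of_nonneg_right h1 hc0.le
      _ = (cM - η / Real.pi) * R := mul_comm _ _
  set S : Set ℝ := W ∩ Set.Icc 0 R with hSdef
  have hSfin : S.Finite := hfin R hRpos
  set n : ℕ := S.ncard with hn
  have hnR : cM * R < (n : ℝ) := by
    have : cM < (n : ℝ) / R := hRu
    calc cM * R < ((n : ℝ) / R) * R := mul_lt_mul_of_pos_right this hRpos
      _ = (n : ℝ) := div_mul_cancel₀ _ hRpos.ne'
  -- the key counting inequality at level R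
  have hfloorR : (⌊η * R / Real.pi⌋ : ℝ) ≤ η * R / Real.pi := Int.floor_le _
  have hkey : MBound (2 * q) η R + 1 < (n : ℝ) := by
    have h1 : η / Real.pi * R + 4 * (q : ℝ) ^ 2 ≤ cM * R := by nlinarith
    have h2 : η * R / Real.pi = η / Real.pi * R := by ring
    simp only [MBound]
    push_cast
    nlinarith
  -- S is nonempty
  have hnpos : 0 < n := by
    by_contra h
    push_neg at h
    interval_cases n
    simp only [MBound] at hkey
    have : (0:ℝ) ≤ (⌊η * R / Real.pi⌋ : ℝ) := by
      exact_mod_cast Int.floor_nonneg.2 (by positivity)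
    push_cast at hkey
    nlinarith [sq_nonneg (2 * (q:ℝ))]
  have hSne : S.Nonempty := Set.nonempty_of_ncard_ne_zero hnpos.ne'
  have hbdd : BddAbove S := ⟨R, fun x hx => hx.2.2⟩
  have hsup_le : sSup S ≤ R := csSup_le hSne fun x hx => hx.2.2
  obtain ⟨s0, hs0⟩ := hSne
  have hsup_ge : 0 ≤ sSup S := le_trans hs0.2.1 (le_csSup hbdd hs0)
  -- monotonicity of MBound
  have hMmono : MBound (2 * q) η (sSup S) ≤ MBound (2 * q) η R := by
    simp only [MBound]
    have : (⌊η * sSup S / Real.pi⌋ : ℝ) ≤ (⌊η * R / Real.pi⌋ : ℝ) := by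
      exact_mod_cast Int.floor_le_floor (by gcongr)
    linarith
  have hM3 : 3 ≤ MBound (2 * q) η (sSup S) := by
    simp only [MBound]
    have h1 : (0:ℝ) ≤ (⌊η * sSup S / Real.pi⌋ : ℝ) := by
      exact_mod_cast Int.floor_nonneg.2 (by positivity)
    have h2 : (2:ℝ) ≤ ((2 * q : ℕ) : ℝ) := by
      push_cast
      have : (1:ℝ) ≤ (q:ℝ) := by exact_mod_cast hq
      nlinarith
    nlinarith
  refine ⟨R, le_trans (le_trans (le_max_left R0 1) (le_max_left _ _)) hRge, ?_⟩
  -- the set defining the metric span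
  set M : ℝ := MBound (2 * q) η (sSup S) with hM
  set A : Set ℝ := {x : ℝ | ∃ ε > 0,
    x = ε * ((coveringNumber ε S : ℝ) - M)} with hA
  have hAbdd : BddAbove A := by
    refine ⟨R, fun x hx => ?_⟩
    obtain ⟨ε, hε, rfl⟩ := hx
    have hcov : (coveringNumber ε S : ℝ) ≤ R / ε + 2 := by
      have h1 : coveringNumber ε S ≤ ⌈R / ε⌉₊ + 1 :=
        Nat.sInf_le (cov_mem hε (Set.inter_subset_right))
      have h2 : ((⌈R / ε⌉₊ : ℝ) + 1) ≤ R / ε + 2 := by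
        have := (Nat.ceil_lt_add_one (div_nonneg hRpos.le hε.le)).le
        linarith
      calc (coveringNumber ε S : ℝ) ≤ (⌈R / ε⌉₊ : ℝ) + 1 := by exact_mod_cast h1
        _ ≤ R / ε + 2 := h2
    have hεR : ε * (R / ε) = R := by
      field_simp
    nlinarith [mul_le_mul_of_nonneg_left (sub_le_sub hcov hM3) hε.le]
  -- a positive element of A
  obtain ⟨ε0, hε0, hsep⟩ := exists_sep hSfin
  have hcovge : (n : ℝ) ≤ (coveringNumber ε0 S : ℝ) := by
    exact_mod_cast ncard_le_cov hSfin ⟨_, cov_mem hε0 (Set.inter_subset_right)⟩ hsep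
  have hx0 : ε0 * ((coveringNumber ε0 S : ℝ) - M) ∈ A := ⟨ε0, hε0, rfl⟩
  have hx0pos : 0 < ε0 * ((coveringNumber ε0 S : ℝ) - M) := by
    have : M ≤ MBound (2 * q) η R := hMmono
    nlinarith
  have hsSupA : 0 < sSup A := lt_of_lt_of_le hx0pos (le_csSup hAbdd hx0)
  simp only [metricSpan]
  exact lt_max_of_lt_right hsSupA
end

section
/- Let x_1,…,x_N be pairwise distinct complex numbers. Then there exists a constant C > 0, depending only on x_1,…,x_N, such that for all nonzero complex numbers a_1,…,a_N there exists δ_0 > 0 with the following property: whenever 0 < δ < δ_0 and δ_0',…,δ_{2N−1}' ∈ ℂ satisfy |δ_k'| < δ for k = 0,…,2N−1, there exist complex numbers x̃_1,…,x̃_N, ã_1,…,ã_N such that ∑_{j=1}^N ã_j·x̃_j^k = m_k + δ_k' for all k = 0,…,2N−1, where m_k = ∑_{j=1}^N a_j·x_j^k, and moreover |a_j − ã_j| ≤ C·δ and |x_j − x̃_j| ≤ C·|a_j|^{−1}·δ for every j = 1,…,N. -/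
/-!
Rescale the perturbation as `x̃ⱼ = xⱼ + uⱼ / aⱼ`, `ãⱼ = aⱼ + vⱼ`. The derivative at `(u, v) = 0`
of the rescaled Prony map `(u, v) ↦ (∑ⱼ ãⱼ x̃ⱼ ^ k)ₖ` is the confluent Vandermonde map
`(u, v) ↦ (∑ⱼ vⱼ xⱼ ^ k + uⱼ k xⱼ ^ (k - 1))ₖ`, which no longer involves the amplitudes. It is
injective, hence invertible, for distinct nodes: its kernel consists of the `(u, v)` for which
`q ↦ ∑ⱼ vⱼ q(xⱼ) + uⱼ q'(xⱼ)` kills all polynomials of degree `< 2N`, and testing this on the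
Hermite-type polynomials `∏_{l ≠ j} (X - xₗ)²` and `(X - xⱼ) ∏_{l ≠ j} (X - xₗ)²` forces
`uⱼ = vⱼ = 0`. The inverse function theorem then solves the perturbed system with
`‖(u, v)‖ ≤ C δ` for any `C` exceeding the norm of the inverse of the confluent Vandermonde map.
-/

open Polynomial Finset Lagrange

section Algebra

variable {R : Type*} [CommRing R] {N : ℕ}

noncomputable def hermiteForm (x u v : Fin N → R) : R[X] →ₗ[R] R :=
  ∑ j, (v j • leval (x j) + u j • leval (x j) ∘ₗ derivative)

lemma hermiteForm_apply (x u v : Fin N → R) (q : R[X]) :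
    hermiteForm x u v q = ∑ j, (v j * q.eval (x j) + u j * (derivative q).eval (x j)) := by
  simp [hermiteForm]

noncomputable def confluentVandermonde (x : Fin N → R) :
    (Fin N → R) × (Fin N → R) →ₗ[R] Fin (2 * N) → R where
  -- `(i : ℕ) - 1` truncates at `i = 0`, where the factor `i` kills the term anyway.
  toFun p i := ∑ j, (p.2 j * x j ^ (i : ℕ) + p.1 j * ((i : ℕ) * x j ^ ((i : ℕ) - 1)))
  map_add' p q := by
    funext i
    simp only [Prod.fst_add, Prod.snd_add, Pi.add_apply, ← sum_add_distrib]
    exact sum_congr rfl fun j _ => by ring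
  map_smul' c p := by
    funext i
    simp only [Prod.smul_fst, Prod.smul_snd, Pi.smul_apply, smul_eq_mul, RingHom.id_apply,
      mul_sum]
    exact sum_congr rfl fun j _ => by ring

lemma confluentVandermonde_apply (x : Fin N → R) (p : (Fin N → R) × (Fin N → R))
    (i : Fin (2 * N)) :
    confluentVandermonde x p i = hermiteForm x p.1 p.2 (X ^ (i : ℕ)) := by
  simp [confluentVandermonde, hermiteForm_apply, derivative_X_pow]

lemma hermiteForm_eq_zero_of_natDegree_lt {x u v : Fin N → R}
    (h : ∀ i : Fin (2 * N), hermiteForm x u v (X ^ (i : ℕ)) = 0) {q : R[X]}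
    (hq : q.natDegree < 2 * N) : hermiteForm x u v q = 0 := by
  rw [q.as_sum_range' _ hq, map_sum]
  refine sum_eq_zero fun n hn => ?_
  rw [← smul_X_eq_monomial, map_smul, h ⟨n, mem_range.mp hn⟩, smul_zero]

lemma eval_derivative_eq_zero_of_sq_dvd {c : R} {p : R[X]} (h : (X - C c) ^ 2 ∣ p) :
    (derivative p).eval c = 0 := by
  obtain ⟨r, rfl⟩ := h
  simp [derivative_mul, derivative_X_sub_C_sq]

lemma hermiteForm_eq_of_sq_dvd (x u v : Fin N → R) {q : R[X]} (j : Fin N)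
    (hq : ∀ m ≠ j, (X - C (x m)) ^ 2 ∣ q) :
    hermiteForm x u v q = v j * q.eval (x j) + u j * (derivative q).eval (x j) := by
  rw [hermiteForm_apply, sum_eq_single j (fun m _ hm => ?_) (by simp)]
  rw [eval_derivative_eq_zero_of_sq_dvd (hq m hm),
    eval_eq_zero_of_dvd_of_eval_eq_zero (hq m hm) (by simp)]
  ring

lemma sq_X_sub_C_dvd_sq_nodal_erase (x : Fin N → R) {j m : Fin N} (hm : m ≠ j) :
    (X - C (x m)) ^ 2 ∣ nodal (univ.erase j) x ^ 2 :=
  pow_dvd_pow_of_dvd (X_sub_C_dvd_nodal x (mem_erase.mpr ⟨hm, mem_univ m⟩)) 2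

lemma confluentVandermonde_injective [IsDomain R] {x : Fin N → R} (hx : Function.Injective x) :
    Function.Injective (confluentVandermonde x) := by
  rw [← LinearMap.ker_eq_bot, LinearMap.ker_eq_bot']
  rintro ⟨u, v⟩ huv
  have hvanish : ∀ q : R[X], q.natDegree < 2 * N → hermiteForm x u v q = 0 :=
    fun q => hermiteForm_eq_zero_of_natDegree_lt fun i => by
      simpa [confluentVandermonde_apply] using congrFun huv i
  suffices ∀ j, u j = 0 ∧ v j = 0 from
    Prod.ext (funext fun j => (this j).1) (funext fun j => (this j).2)
  intro j
  set Q := nodal (univ.erase j) x ^ 2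
  have hnodal : (nodal (univ.erase j) x).eval (x j) ≠ 0 :=
    eval_nodal_not_at_node fun m hm h => (mem_erase.mp hm).1 (hx h).symm
  have hQdeg : Q.natDegree = 2 * (N - 1) := by
    simp [Q, natDegree_nodal, card_erase_of_mem (mem_univ j)]
  have hPdeg : ((X - C (x j)) * Q).natDegree < 2 * N :=
    natDegree_mul_le.trans_lt (by rw [natDegree_X_sub_C, hQdeg]; have := j.pos; omega)
  have hu : u j = 0 := by
    have := hvanish _ hPdeg
    rw [hermiteForm_eq_of_sq_dvd x u v j fun m hm =>
      (sq_X_sub_C_dvd_sq_nodal_erase x hm).mul_left _] at this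
    simpa [derivative_mul, hnodal] using this
  have hv : v j = 0 := by
    have := hvanish Q (by rw [hQdeg]; have := j.pos; omega)
    rw [hermiteForm_eq_of_sq_dvd x u v j fun m hm => sq_X_sub_C_dvd_sq_nodal_erase x hm,
      hu] at this
    simpa [hnodal] using this
  exact ⟨hu, hv⟩

def pronyMap (p : (Fin N → R) × (Fin N → R)) : Fin (2 * N) → R :=
  fun i => ∑ j, p.2 j * p.1 j ^ (i : ℕ)

end Algebra

section Field

variable {K : Type*} [Field K] {N : ℕ}

noncomputable def confluentVandermondeEquiv {x : Fin N → K} (hx : Function.Injective x) :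
    ((Fin N → K) × (Fin N → K)) ≃ₗ[K] (Fin (2 * N) → K) :=
  (confluentVandermonde x).linearEquivOfInjective (confluentVandermonde_injective hx)
    (by simp; ring)

def rescaledPronyMap (x a : Fin N → K) (p : (Fin N → K) × (Fin N → K)) : Fin (2 * N) → K :=
  pronyMap (x + p.1 / a, a + p.2)

lemma rescaledPronyMap_zero (x a : Fin N → K) : rescaledPronyMap x a 0 = pronyMap (x, a) := by
  simp [rescaledPronyMap, show (0 : Fin N → K) / a = 0 from funext fun j => zero_div (a j)]

end Field

open Metric ContinuousLinearMap
open scoped NNReal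

theorem HasStrictFDerivAt.exists_ball_subset_image_dist_le
    {𝕜 E F : Type*} [NontriviallyNormedField 𝕜] [NormedAddCommGroup E] [NormedSpace 𝕜 E]
    [CompleteSpace E] [NormedAddCommGroup F] [NormedSpace 𝕜 F] {f : E → F} {f' : E ≃L[𝕜] F}
    {a : E} (hf : HasStrictFDerivAt f (f' : E →L[𝕜] F) a) {K : ℝ≥0}
    (hK : ‖(f'.symm : F →L[𝕜] E)‖₊ < K) :
    ∃ r > 0, ∀ y ∈ ball (f a) r, ∃ z, f z = y ∧ dist z a ≤ K * dist y (f a) := by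
  set g := hf.localInverse f f' a
  obtain ⟨s, hs, hlip⟩ := hf.to_localInverse.exists_lipschitzOnWith_of_nnnorm_lt K hK
  obtain ⟨r, hr, hball⟩ := Metric.mem_nhds_iff.mp (Filter.inter_mem hs hf.eventually_right_inverse)
  refine ⟨r, hr, fun y hy => ⟨g y, (hball hy).2, ?_⟩⟩
  simpa [g] using hlip.dist_le_mul y (hball hy).1 (f a) (mem_of_mem_nhds hs)

theorem hasStrictFDerivAt_rescaledPronyMap {𝕜 : Type*} [NontriviallyNormedField 𝕜]
    [CompleteSpace 𝕜] {N : ℕ} (x : Fin N → 𝕜) {a : Fin N → 𝕜} (ha : ∀ j, a j ≠ 0) :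
    HasStrictFDerivAt (rescaledPronyMap x a)
      (LinearMap.toContinuousLinearMap (confluentVandermonde x)) 0 := by
  rw [hasStrictFDerivAt_pi']
  intro i
  have hfst (j : Fin N) : HasStrictFDerivAt (fun p : (Fin N → 𝕜) × (Fin N → 𝕜) => p.1 j)
      ((proj j).comp (fst 𝕜 _ _)) 0 :=
    ((proj (R := 𝕜) j).comp (fst 𝕜 (Fin N → 𝕜) (Fin N → 𝕜))).hasStrictFDerivAt
  have hsnd (j : Fin N) : HasStrictFDerivAt (fun p : (Fin N → 𝕜) × (Fin N → 𝕜) => p.2 j)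
      ((proj j).comp (snd 𝕜 _ _)) 0 :=
    ((proj (R := 𝕜) j).comp (snd 𝕜 (Fin N → 𝕜) (Fin N → 𝕜))).hasStrictFDerivAt
  have hterm (j : Fin N) :=
    ((hsnd j).const_add (a j)).mul ((((hfst j).mul_const (a j)⁻¹).const_add (x j)).pow (i : ℕ))
  convert HasStrictFDerivAt.sum fun j (_ : j ∈ univ) => hterm j using 1
  · ext p
    simp [rescaledPronyMap, pronyMap, div_eq_mul_inv]
  · ext p
    · simp only [confluentVandermonde, comp_apply, inl_apply, LinearMap.coe_toContinuousLinearMap',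
        LinearMap.coe_mk, AddHom.coe_mk, Pi.zero_apply, zero_mul, zero_add, proj_apply,
        Prod.snd_zero, add_zero, Prod.fst_zero, nsmul_eq_mul, _root_.sum_apply, add_apply,
        smul_apply, coe_fst', smul_eq_mul, coe_snd', mul_zero]
      exact sum_congr rfl fun j _ => by field_simp [ha j]
    · simp [confluentVandermonde, mul_comm]

/-- Local Lipschitz-type stability of the inverse Prony map: for pairwise distinct nodes
`x_1,…,x_N` there is a constant `C`, depending only on the nodes, such that for nonzero
amplitudes `a_1,…,a_N` and all sufficiently small perturbations of the moments
`m_k = ∑_j a_j x_j^k`, `k = 0,…,2N-1`, the perturbed Prony system has a solution whose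
parameters deviate from the original ones by at most `Cδ` (amplitudes) and
`C|a_j|⁻¹δ` (nodes). -/
theorem stmt7
    (N : ℕ) (x : Fin N → ℂ) (hx : Function.Injective x) :
    ∃ C > (0 : ℝ), ∀ a : Fin N → ℂ, (∀ j, a j ≠ 0) →
      ∃ δ0 > (0 : ℝ), ∀ δ : ℝ, 0 < δ → δ < δ0 →
        ∀ δ' : Fin (2 * N) → ℂ, (∀ i, ‖δ' i‖ < δ) →
          ∃ (tx ta : Fin N → ℂ),
            (∀ i : Fin (2 * N),
              ∑ j, ta j * tx j ^ (i : ℕ) = (∑ j, a j * x j ^ (i : ℕ)) + δ' i) ∧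
            ∀ j, ‖a j - ta j‖ ≤ C * δ ∧
              ‖x j - tx j‖ ≤ C * ‖a j‖⁻¹ * δ := by
  set e := (confluentVandermondeEquiv hx).toContinuousLinearEquiv
  set C : ℝ≥0 := ‖(e.symm : (Fin (2 * N) → ℂ) →L[ℂ] (Fin N → ℂ) × (Fin N → ℂ))‖₊ + 1
  refine ⟨C, by positivity, fun a ha => ?_⟩
  obtain ⟨r, hr, hsolve⟩ :=
    (hasStrictFDerivAt_rescaledPronyMap x ha).exists_ball_subset_image_dist_le
      (f' := e) (K := C) (lt_add_one _)
  rw [rescaledPronyMap_zero] at hsolve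
  refine ⟨r, hr, fun δ hδ hδr δ' hδ' => ?_⟩
  have hδ'_norm : ‖δ'‖ < δ := (pi_norm_lt_iff hδ).mpr hδ'
  obtain ⟨z, hz, hz_dist⟩ := hsolve (pronyMap (x, a) + δ') (by simpa using hδ'_norm.trans hδr)
  have hz_norm : ‖z‖ ≤ C * δ := by
    simpa using hz_dist.trans (by gcongr; simpa using hδ'_norm.le)
  refine ⟨x + z.1 / a, a + z.2, fun i => congrFun hz i, fun j => ⟨?_, ?_⟩⟩
  · simpa using (norm_le_pi_norm z.2 j).trans ((norm_snd_le z).trans hz_norm)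
  · have hz₁ : ‖z.1 j‖ ≤ C * δ := (norm_le_pi_norm z.1 j).trans ((norm_fst_le z).trans hz_norm)
    calc ‖x j - (x + z.1 / a) j‖ = ‖a j‖⁻¹ * ‖z.1 j‖ := by simp [div_eq_inv_mul]
      _ ≤ ‖a j‖⁻¹ * (C * δ) := by gcongr
      _ = C * ‖a j‖⁻¹ * δ := by ring
end

section
/- Let R̄ > 0 and let q_1,…,q_r be positive real numbers with q = min_ℓ q_ℓ and Q = max_ℓ q_ℓ. Define h̄ = R̄·q/(4r) if Q·R̄ ≤ π, and h̄ = π·q/(3r·Q) if Q·R̄ > π; then h̄ ≤ π/4 in the first case and h̄ ≤ π/3 in the second. There exists s_0 ∈ (0, R̄] such that for every ℓ = 1,…,r and every integer m ∈ ℤ, |q_ℓ·s_0 − 2π·m| ≥ h̄. -/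
/-- If `h ≤ x ≤ π`, then `x` is at distance at least `h` from every multiple of `2π`. -/
lemma stmt13_aux (x h : ℝ) (hx1 : h ≤ x) (hx2 : x ≤ Real.pi) (m : ℤ) :
    h ≤ |x - 2 * Real.pi * m| := by
  have pi_pos := Real.pi_pos
  rcases le_or_gt m 0 with hm | hm
  · have hm' : (m : ℝ) ≤ 0 := by exact_mod_cast hm
    have h2 : 2 * Real.pi * m ≤ 0 :=
      mul_nonpos_of_nonneg_of_nonpos (by positivity) hm'
    have : h ≤ x - 2 * Real.pi * m := by linarith
    exact this.trans (le_abs_self _)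
  · have hm' : (1 : ℝ) ≤ m := by exact_mod_cast hm
    have h2 : 2 * Real.pi ≤ 2 * Real.pi * m := by nlinarith
    refine le_abs.mpr (Or.inr ?_)
    linarith

/-- Separation of angles from multiples of `2π`: given `R̄ > 0` and positive reals
`q_1,…,q_r` with minimum `q` and maximum `Q`, for `h̄ = R̄q/(4r)` if `QR̄ ≤ π` and
`h̄ = πq/(3rQ)` otherwise (so `h̄ ≤ π/4`, resp. `h̄ ≤ π/3`), there is `s₀ ∈ (0, R̄]`
such that every `q_ℓ s₀` is at distance at least `h̄` from every integer multiple
of `2π`. -/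
theorem stmt13
    (r : ℕ) (hr : 0 < r) (q : Fin r → ℝ) (hq : ∀ ℓ, 0 < q ℓ)
    (Rbar : ℝ) (hR : 0 < Rbar)
    (qmin Qmax : ℝ)
    (hqmin : IsLeast (Set.range q) qmin)
    (hQmax : IsGreatest (Set.range q) Qmax)
    (hbar : ℝ)
    (hh : hbar = if Qmax * Rbar ≤ Real.pi
        then Rbar * qmin / (4 * r)
        else Real.pi * qmin / (3 * r * Qmax)) :
    (if Qmax * Rbar ≤ Real.pi then hbar ≤ Real.pi / 4 else hbar ≤ Real.pi / 3) ∧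
    ∃ s0 ∈ Set.Ioc (0 : ℝ) Rbar, ∀ ℓ, ∀ m : ℤ,
      hbar ≤ |q ℓ * s0 - 2 * Real.pi * m| := by
  obtain ⟨ℓ0, hℓ0⟩ := hqmin.1
  have hqmin_pos : 0 < qmin := hℓ0 ▸ hq ℓ0
  obtain ⟨ℓ1, hℓ1⟩ := hQmax.1
  have hQpos : 0 < Qmax := hℓ1 ▸ hq ℓ1
  have hle : ∀ ℓ, qmin ≤ q ℓ := fun ℓ => hqmin.2 ⟨ℓ, rfl⟩
  have hge : ∀ ℓ, q ℓ ≤ Qmax := fun ℓ => hQmax.2 ⟨ℓ, rfl⟩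
  have hmQ : qmin ≤ Qmax := hℓ1 ▸ hle ℓ1
  have hr1 : (1 : ℝ) ≤ r := by exact_mod_cast hr
  have pi_pos := Real.pi_pos
  by_cases hc : Qmax * Rbar ≤ Real.pi
  · rw [if_pos hc] at hh ⊢
    have hnum : Rbar * qmin ≤ Real.pi := by nlinarith
    have hb4 : hbar ≤ Real.pi / 4 := by
      rw [hh]
      exact div_le_div₀ pi_pos.le hnum (by norm_num) (by linarith)
    refine ⟨hb4, Rbar, ⟨hR, le_refl _⟩, fun ℓ m => ?_⟩
    apply stmt13_aux
    · have h1 : hbar ≤ Rbar * qmin := by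
        rw [hh]; exact div_le_self (by positivity) (by linarith)
      nlinarith [hle ℓ]
    · nlinarith [hge ℓ]
  · rw [if_neg hc] at hh ⊢
    push_neg at hc
    have hb3 : hbar ≤ Real.pi / 3 := by
      rw [hh, div_le_div_iff₀ (by positivity) (by norm_num)]
      nlinarith [mul_le_mul_of_nonneg_left hmQ pi_pos.le,
        mul_le_mul_of_nonneg_left hr1 (mul_nonneg pi_pos.le hQpos.le)]
    refine ⟨hb3, Real.pi / Qmax, ⟨by positivity, ?_⟩, fun ℓ m => ?_⟩
    · rw [div_le_iff₀ hQpos]; nlinarith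
    apply stmt13_aux
    · rw [hh, show q ℓ * (Real.pi / Qmax) = q ℓ * Real.pi / Qmax from (mul_div_assoc _ _ _).symm,
        div_le_div_iff₀ (by positivity) hQpos]
      nlinarith [hle ℓ, hq ℓ, mul_le_mul_of_nonneg_left (hle ℓ)
        (le_of_lt (mul_pos pi_pos hQpos)), mul_nonneg (mul_nonneg pi_pos.le hQpos.le) (hq ℓ).le]
    · rw [show q ℓ * (Real.pi / Qmax) = q ℓ * Real.pi / Qmax from (mul_div_assoc _ _ _).symm,
        div_le_iff₀ hQpos]
      nlinarith [hge ℓ]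
end

section
/- Let φ_1,…,φ_N be pairwise distinct real numbers with λ = max_j |φ_j|, Δ = min_{i<j} |φ_i − φ_j|, and let R > 0. Define h̄ = R·Δ/(2N²(N+1)) if λ·R ≤ π·N, and h̄ = 2π·Δ/(3λ·N(N+1)) if λ·R > π·N; then h̄ ≤ π/4 in the first case and h̄ ≤ π/3 in the second. There exists s_0 ∈ (0, R/(2N)] such that: (i) for all 1 ≤ i < j ≤ N and all integers m ∈ ℤ, ||φ_i − φ_j|·s_0 − 2π·m| ≥ h̄; and (ii) the points x_j = exp(i·φ_j·s_0), j = 1,…,N, on the unit circle satisfy min_{i≠j} |x_i − x_j| ≥ ρ, where ρ = 3R·Δ/(2π·N²(N+1)) if λ·R ≤ π·N and ρ = 2Δ/(λ·N(N+1)) if λ·R > π·N. -/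
/-!
Take `s₀ = R/(2N)` if `λR ≤ πN` and `s₀ = π/(2λ)` otherwise. Then every angle
`θ = |φᵢ - φⱼ| s₀` lies in `[h̄, π]`: below by `Δ s₀ ≥ h̄`, above by `2λ s₀ ≤ π`. Such an angle is
at distance at least `h̄` from `2πℤ`, and the chord `|e^{iθ} - 1| = 2 sin (θ/2)` is at least
`2 sin (h̄/2) ≥ (3/π) h̄`, by concavity of `sin` on `[0, π/6]` (where `h̄ ≤ π/3` is needed).
-/

open Real

theorem Real.mul_le_sin_of_le_pi_div_six {x : ℝ} (hx : 0 ≤ x) (hx' : x ≤ π / 6) :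
    3 / π * x ≤ sin x := by
  have ht : 6 * x / π ≤ 1 := by rw [div_le_one pi_pos]; linarith
  have h := strictConcaveOn_sin_Icc.concaveOn.2 ⟨le_rfl, pi_pos.le⟩
    (⟨by positivity, by linarith [pi_pos]⟩ : π / 6 ∈ Set.Icc 0 π)
    (sub_nonneg.2 ht) (by positivity) (sub_add_cancel 1 _)
  have hx : 6 * x / π * (π / 6) = x := by field_simp
  have hsin : 6 * x / π * 2⁻¹ = 3 / π * x := by ring
  simpa [hx, hsin] using h

theorem Complex.norm_exp_I_mul_sub_exp_I_mul (a b : ℝ) :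
    ‖exp (I * a) - exp (I * b)‖ = 2 * |Real.sin ((a - b) / 2)| := by
  have h : exp (I * a) - exp (I * b) = exp (I * b) * (exp (I * ↑(a - b)) - 1) := by
    rw [mul_sub, ← exp_add]; push_cast; ring_nf
  rw [h, norm_mul, norm_exp_I_mul_ofReal, one_mul, norm_exp_I_mul_ofReal_sub_one, norm_mul,
    Real.norm_ofNat, Real.norm_eq_abs]

theorem le_abs_sub_two_pi_mul_int {h θ : ℝ} (hθ : h ≤ θ) (hθπ : θ ≤ π) (m : ℤ) :
    h ≤ |θ - 2 * π * m| := by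
  rcases le_or_gt m 0 with hm | hm
  · have : (m : ℝ) ≤ 0 := by exact_mod_cast hm
    exact le_abs.2 (Or.inl (by nlinarith [pi_pos]))
  · have : (1 : ℝ) ≤ m := by exact_mod_cast hm
    exact le_abs.2 (Or.inr (by nlinarith [pi_pos]))

theorem Complex.mul_le_norm_exp_I_mul_sub_exp_I_mul {h a b : ℝ} (hh : 0 ≤ h) (hh' : h ≤ π / 3)
    (hab : h ≤ |a - b|) (hab' : |a - b| ≤ π) :
    3 / π * h ≤ ‖exp (I * a) - exp (I * b)‖ := by
  have hhalf : |(a - b) / 2| = |a - b| / 2 := by rw [abs_div, abs_two]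
  rw [norm_exp_I_mul_sub_exp_I_mul, abs_sin_eq_sin_abs_of_abs_le_pi (by rw [hhalf]; linarith),
    hhalf]
  calc 3 / π * h = 2 * (3 / π * (h / 2)) := by ring
    _ ≤ 2 * Real.sin (h / 2) := by
      gcongr
      exact mul_le_sin_of_le_pi_div_six (by linarith) (by linarith)
    _ ≤ 2 * Real.sin (|a - b| / 2) := by
      gcongr
      exact sin_le_sin_of_le_of_le_pi_div_two (by linarith [pi_pos]) (by linarith) (by linarith)

theorem scaled_frequencies_separated {ι : Type*} (φ : ι → ℝ) {lam Δ h ρ s : ℝ}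
    (hlam : ∀ j, |φ j| ≤ lam) (hΔ : ∀ i j, i ≠ j → Δ ≤ |φ i - φ j|) (hs : 0 ≤ s)
    (hh0 : 0 ≤ h) (hh : h ≤ π / 3) (hhΔ : h ≤ Δ * s) (hlams : 2 * lam * s ≤ π)
    (hρ : ρ ≤ 3 / π * h) :
    (∀ i j, i ≠ j → ∀ m : ℤ, h ≤ |(|φ i - φ j| * s - 2 * π * m)|) ∧
      ∀ i j, i ≠ j →
        ρ ≤ ‖Complex.exp (Complex.I * φ i * s) - Complex.exp (Complex.I * φ j * s)‖ := by
  have hlow : ∀ i j, i ≠ j → h ≤ |φ i - φ j| * s := fun i j hij =>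
    hhΔ.trans (mul_le_mul_of_nonneg_right (hΔ i j hij) hs)
  have hhigh : ∀ i j, |φ i - φ j| * s ≤ π := fun i j =>
    (mul_le_mul_of_nonneg_right ((abs_sub _ _).trans (by linarith [hlam i, hlam j])) hs).trans
      hlams
  refine ⟨fun i j hij => le_abs_sub_two_pi_mul_int (hlow i j hij) (hhigh i j), fun i j hij => ?_⟩
  have hangle : |φ i * s - φ j * s| = |φ i - φ j| * s := by
    rw [← sub_mul, abs_mul, abs_of_nonneg hs]
  have hexp : ∀ k, Complex.I * φ k * s = Complex.I * ↑(φ k * s) := fun k => by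
    push_cast; ring
  rw [hexp, hexp]
  exact hρ.trans (Complex.mul_le_norm_exp_I_mul_sub_exp_I_mul hh0 hh
    (hangle ▸ hlow i j hij) (hangle ▸ hhigh i j))

theorem step_bounds_of_mul_le_pi_mul {N R Δ lam : ℝ} (hN : 2 ≤ N) (hR : 0 < R) (hΔ : 0 ≤ Δ)
    (hΔlam : Δ ≤ 2 * lam) (hc : lam * R ≤ π * N) :
    0 ≤ R * Δ / (2 * N ^ 2 * (N + 1)) ∧ R * Δ / (2 * N ^ 2 * (N + 1)) ≤ π / 4 ∧
      R * Δ / (2 * N ^ 2 * (N + 1)) ≤ Δ * (R / (2 * N)) ∧ 2 * lam * (R / (2 * N)) ≤ π := by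
  have hN0 : 0 < N := by linarith
  refine ⟨by positivity, ?_, ?_, ?_⟩
  · have hRΔ : R * Δ ≤ 2 * π * N := by nlinarith [mul_le_mul_of_nonneg_left hΔlam hR.le]
    rw [div_le_iff₀ (by positivity)]
    nlinarith [mul_nonneg (mul_pos pi_pos hN0).le (show 0 ≤ N * (N + 1) - 4 by nlinarith)]
  · rw [div_le_iff₀ (by positivity)]
    field_simp
    nlinarith [mul_nonneg hΔ (show 0 ≤ N * (N + 1) - 1 by nlinarith)]
  · rw [show 2 * lam * (R / (2 * N)) = lam * R / N by field_simp, div_le_iff₀ hN0]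
    exact hc

theorem step_bounds_of_pi_mul_lt {N R Δ lam : ℝ} (hN : 2 ≤ N) (hR : 0 < R) (hΔ : 0 ≤ Δ)
    (hΔlam : Δ ≤ 2 * lam) (hc : π * N < lam * R) :
    0 < π / (2 * lam) ∧ π / (2 * lam) ≤ R / (2 * N) ∧
      0 ≤ 2 * π * Δ / (3 * lam * N * (N + 1)) ∧ 2 * π * Δ / (3 * lam * N * (N + 1)) ≤ π / 3 ∧
      2 * π * Δ / (3 * lam * N * (N + 1)) ≤ Δ * (π / (2 * lam)) ∧
      2 * lam * (π / (2 * lam)) ≤ π := by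
  have hN0 : 0 < N := by linarith
  have hlam : 0 < lam := by
    by_contra! h
    nlinarith [pi_pos, mul_nonpos_of_nonpos_of_nonneg h hR.le]
  refine ⟨by positivity, ?_, by positivity, ?_, ?_, le_of_eq (by field_simp)⟩
  · rw [div_le_div_iff₀ (by positivity) (by positivity)]
    linarith
  · rw [div_le_iff₀ (by positivity)]
    nlinarith [mul_le_mul_of_nonneg_left hΔlam pi_pos.le,
      mul_nonneg (mul_pos pi_pos hlam).le (show 0 ≤ N * (N + 1) - 4 by nlinarith)]
  · rw [div_le_iff₀ (by positivity)]
    field_simp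
    nlinarith [mul_nonneg hΔ (show 0 ≤ 3 * N * (N + 1) - 4 by nlinarith)]

theorem stmt14_general
    (N : ℕ) (φ : Fin N → ℝ)
    (lam Δ : ℝ)
    (hlam : IsGreatest (Set.range fun j => |φ j|) lam)
    (hΔ : IsLeast {y : ℝ | ∃ i j, i ≠ j ∧ y = |φ i - φ j|} Δ)
    (R : ℝ) (hR : 0 < R)
    (hbar ρ : ℝ)
    (hh : hbar = if lam * R ≤ Real.pi * N
        then R * Δ / (2 * (N : ℝ) ^ 2 * ((N : ℝ) + 1))
        else 2 * Real.pi * Δ / (3 * lam * (N : ℝ) * ((N : ℝ) + 1)))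
    (hρ : ρ = if lam * R ≤ Real.pi * N
        then 3 * R * Δ / (2 * Real.pi * (N : ℝ) ^ 2 * ((N : ℝ) + 1))
        else 2 * Δ / (lam * (N : ℝ) * ((N : ℝ) + 1))) :
    (if lam * R ≤ Real.pi * N then hbar ≤ Real.pi / 4 else hbar ≤ Real.pi / 3) ∧
    ∃ s0 ∈ Set.Ioc (0 : ℝ) (R / (2 * N)),
      (∀ i j, i ≠ j → ∀ m : ℤ, hbar ≤ abs (|φ i - φ j| * s0 - 2 * Real.pi * m)) ∧
      (∀ i j, i ≠ j →
        ρ ≤ ‖Complex.exp (Complex.I * φ i * s0)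
            - Complex.exp (Complex.I * φ j * s0)‖) := by
  obtain ⟨⟨i₀, j₀, hij₀, hΔeq⟩, hΔle⟩ := hΔ
  have hub : ∀ j, |φ j| ≤ lam := fun j => hlam.2 ⟨j, rfl⟩
  have hsep : ∀ i j, i ≠ j → Δ ≤ |φ i - φ j| := fun i j hij => hΔle ⟨i, j, hij, rfl⟩
  have hΔ0 : 0 ≤ Δ := hΔeq ▸ abs_nonneg _
  have hΔlam : Δ ≤ 2 * lam := hΔeq ▸ (abs_sub _ _).trans (by linarith [hub i₀, hub j₀])
  have hN : (2 : ℝ) ≤ N := by exact_mod_cast Fin.nontrivial_iff_two_le.1 ⟨⟨i₀, j₀, hij₀⟩⟩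
  split_ifs at hh hρ ⊢ with hc <;> subst hh hρ
  · obtain ⟨h0, h4, hΔs, hlams⟩ := step_bounds_of_mul_le_pi_mul hN hR hΔ0 hΔlam hc
    exact ⟨h4, R / (2 * N), ⟨by positivity, le_rfl⟩, scaled_frequencies_separated φ hub hsep
      (by positivity) h0 (h4.trans (by linarith [pi_pos])) hΔs hlams
      (le_of_eq (by field_simp))⟩
  · obtain ⟨hs0, hsR, h0, h3, hΔs, hlams⟩ :=
      step_bounds_of_pi_mul_lt hN hR hΔ0 hΔlam (not_le.1 hc)
    exact ⟨h3, π / (2 * lam), ⟨hs0, hsR⟩, scaled_frequencies_separated φ hub hsep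
      hs0.le h0 h3 hΔs hlams (le_of_eq (by field_simp))⟩

/-- Choice of the auxiliary Prony step `s₀`: for pairwise distinct frequencies
`φ_1,…,φ_N` with `λ = max |φ_j|`, `Δ = min_{i<j} |φ_i - φ_j|`, and `R > 0`, setting
`h̄ = RΔ/(2N²(N+1))` if `λR ≤ πN` and `h̄ = 2πΔ/(3λN(N+1))` otherwise (so `h̄ ≤ π/4`,
resp. `h̄ ≤ π/3`), there exists `s₀ ∈ (0, R/(2N)]` such that all angles `|φ_i - φ_j|s₀`
are `h̄`-separated from integer multiples of `2π`, and the points `x_j = e^{iφ_j s₀}`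
on the unit circle satisfy `min_{i≠j} |x_i - x_j| ≥ ρ`, with `ρ = (3/π)h̄`, i.e.
`ρ = 3RΔ/(2πN²(N+1))` if `λR ≤ πN` and `ρ = 2Δ/(λN(N+1))` otherwise. -/
theorem stmt14
    (N : ℕ) (hN : 0 < N) (φ : Fin N → ℝ) (hφ : Function.Injective φ)
    (lam Δ : ℝ)
    (hlam : IsGreatest (Set.range fun j => |φ j|) lam)
    (hΔ : IsLeast {y : ℝ | ∃ i j, i ≠ j ∧ y = |φ i - φ j|} Δ)
    (R : ℝ) (hR : 0 < R)
    (hbar ρ : ℝ)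
    (hh : hbar = if lam * R ≤ Real.pi * N
        then R * Δ / (2 * (N : ℝ) ^ 2 * ((N : ℝ) + 1))
        else 2 * Real.pi * Δ / (3 * lam * (N : ℝ) * ((N : ℝ) + 1)))
    (hρ : ρ = if lam * R ≤ Real.pi * N
        then 3 * R * Δ / (2 * Real.pi * (N : ℝ) ^ 2 * ((N : ℝ) + 1))
        else 2 * Δ / (lam * (N : ℝ) * ((N : ℝ) + 1))) :
    (if lam * R ≤ Real.pi * N then hbar ≤ Real.pi / 4 else hbar ≤ Real.pi / 3) ∧
    ∃ s0 ∈ Set.Ioc (0 : ℝ) (R / (2 * N)),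
      (∀ i j, i ≠ j → ∀ m : ℤ, hbar ≤ abs (|φ i - φ j| * s0 - 2 * Real.pi * m)) ∧
      (∀ i j, i ≠ j →
        ρ ≤ ‖Complex.exp (Complex.I * φ i * s0)
            - Complex.exp (Complex.I * φ j * s0)‖) :=
  stmt14_general N φ lam Δ hlam hΔ R hR hbar ρ hh hρ
end

section
/- Let N ∈ ℕ, λ > 0 be fixed. Let S ⊂ [0,∞) be a finite set with R = sup S (so [0,R] is the minimal interval of the form [0,R'] containing S), and suppose S contains exactly M(N,λ,R) + 1 points. Let η be the minimal distance between two distinct points of S. Then ω_{N,λ}(S) = η. -/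
lemma card_mem_cover (ε : ℝ) (hε : 0 ≤ ε) (S : Finset ℝ) :
    S.card ∈ {n : ℕ | ∃ c : Fin n → ℝ, (S : Set ℝ) ⊆ ⋃ i, Set.Icc (c i) (c i + ε)} := by
  refine ⟨fun i => ((S.equivFin.symm i : ℝ)), fun s hs => ?_⟩
  refine Set.mem_iUnion.2 ⟨S.equivFin ⟨s, hs⟩, ?_⟩
  simp only [Equiv.symm_apply_apply]
  exact ⟨le_refl _, by linarith⟩

lemma cov_le_card (ε : ℝ) (hε : 0 ≤ ε) (S : Finset ℝ) :
    coveringNumber ε S ≤ S.card :=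
  Nat.sInf_le (card_mem_cover ε hε S)

lemma card_le_cov (ε : ℝ) (hε : 0 < ε) (S : Finset ℝ)
    (hsep : ∀ p ∈ S, ∀ q ∈ S, p ≠ q → ε < |p - q|) :
    S.card ≤ coveringNumber ε S := by
  have hne : {n : ℕ | ∃ c : Fin n → ℝ, (S : Set ℝ) ⊆ ⋃ i, Set.Icc (c i) (c i + ε)}.Nonempty :=
    ⟨S.card, card_mem_cover ε hε.le S⟩
  obtain ⟨c, hc⟩ := Nat.sInf_mem hne
  set n := coveringNumber ε S with hn
  by_contra h
  push_neg at h
  have hf : ∀ s : {x // x ∈ S}, ∃ i : Fin n, (s : ℝ) ∈ Set.Icc (c i) (c i + ε) :=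
    fun s => Set.mem_iUnion.1 (hc s.2)
  choose f hfmem using hf
  have hcard : Fintype.card (Fin n) < Fintype.card {x // x ∈ S} := by
    simpa [Fintype.card_coe] using h
  obtain ⟨x, y, hxy, hfeq⟩ := Fintype.exists_ne_map_eq_of_card_lt f hcard
  have h1 := hfmem x
  have h2 := hfmem y
  rw [hfeq] at h1
  have hsep' := hsep x x.2 y y.2 (fun hxy' => hxy (Subtype.ext hxy'))
  have : |(x : ℝ) - y| ≤ ε := by
    rw [abs_sub_le_iff]
    constructor <;> [linarith [h1.1, h1.2, h2.1, h2.2]; linarith [h1.1, h1.2, h2.1, h2.2]]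
  linarith

lemma cov_le_card_sub_one (ε : ℝ) (S : Finset ℝ) (p q : ℝ)
    (hp : p ∈ S) (hq : q ∈ S) (hpq : p ≠ q) (hd : |p - q| ≤ ε) :
    coveringNumber ε S ≤ S.card - 1 := by
  have hε : 0 ≤ ε := le_trans (abs_nonneg _) hd
  set a := p ⊓ q with ha
  set b := p ⊔ q with hb
  have hab : a < b := min_lt_max.2 hpq
  have hba : b - a ≤ ε := by
    rcases le_total p q with h | h
    · rw [abs_sub_comm] at hd
      rw [ha, hb, min_eq_left h, max_eq_right h]; rwa [abs_of_nonneg (by linarith)] at hd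
    · rw [ha, hb, min_eq_right h, max_eq_left h]; rwa [abs_of_nonneg (by linarith)] at hd
  have haS : a ∈ S := by rcases le_total p q with h | h <;> simp [ha, min_eq_left, min_eq_right, h, hp, hq]
  have hbS : b ∈ S := by rcases le_total p q with h | h <;> simp [hb, max_eq_left, max_eq_right, h, hp, hq]
  set S' := S.erase b with hS'
  have haS' : a ∈ S' := Finset.mem_erase.2 ⟨ne_of_lt hab, haS⟩
  have : coveringNumber ε S ≤ S'.card := by
    apply Nat.sInf_le
    refine ⟨fun i => ((S'.equivFin.symm i : ℝ)), fun s hs => ?_⟩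
    by_cases hsb : s = b
    · refine Set.mem_iUnion.2 ⟨S'.equivFin ⟨a, haS'⟩, ?_⟩
      simp only [Equiv.symm_apply_apply]
      exact ⟨by rw [hsb]; linarith, by rw [hsb]; linarith⟩
    · have hs' : s ∈ S' := Finset.mem_erase.2 ⟨hsb, hs⟩
      refine Set.mem_iUnion.2 ⟨S'.equivFin ⟨s, hs'⟩, ?_⟩
      simp only [Equiv.symm_apply_apply]
      exact ⟨le_refl _, by linarith⟩
  rwa [hS', Finset.card_erase_of_mem hbS] at this

/-- If a finite set `S ⊂ [0,∞)` with `R = sup S` contains exactly `M(N,λ,R) + 1` points,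
then its `(N,λ)`-metric span equals the minimal distance `η` between neighboring points. -/
theorem stmt15
    (N : ℕ) (lam : ℝ) (hlam : 0 < lam)
    (S : Finset ℝ) (hSne : S.Nonempty) (hS0 : ∀ s ∈ S, (0 : ℝ) ≤ s)
    (R : ℝ) (hR : R = sSup (S : Set ℝ))
    (hcard : (S.card : ℝ) = MBound N lam R + 1)
    (η : ℝ)
    (hη : IsLeast {y : ℝ | ∃ p ∈ S, ∃ q ∈ S, p ≠ q ∧ y = |p - q|} η) :
    metricSpan N lam ↑S = η := by
  obtain ⟨⟨p, hp, q, hq, hpq, hpqeq⟩, hmin⟩ := hη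
  have hηpos : 0 < η := by
    rw [hpqeq]; exact abs_pos.2 (sub_ne_zero.2 hpq)
  have hcard2 : 2 ≤ S.card := Finset.one_lt_card.2 ⟨p, hp, q, hq, hpq⟩
  have hM : MBound N lam (sSup (S : Set ℝ)) = (S.card : ℝ) - 1 := by
    rw [← hR]; linarith
  set T := {x : ℝ | ∃ ε > 0,
    x = ε * ((coveringNumber ε (S : Set ℝ) : ℝ) - MBound N lam (sSup (S : Set ℝ)))} with hT
  -- covering number equal to card for small ε
  have hcov_eq : ∀ ε : ℝ, 0 < ε → ε < η → (coveringNumber ε (S : Set ℝ) : ℝ) = S.card := by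
    intro ε hε hεη
    have hsep : ∀ p' ∈ S, ∀ q' ∈ S, p' ≠ q' → ε < |p' - q'| := by
      intro p' hp' q' hq' hne
      exact lt_of_lt_of_le hεη (hmin ⟨p', hp', q', hq', hne, rfl⟩)
    exact_mod_cast le_antisymm (cov_le_card ε hε.le S) (card_le_cov ε hε S hsep)
  -- upper bound
  have hub : ∀ x ∈ T, x ≤ η := by
    rintro x ⟨ε, hε, hx⟩
    rw [hM] at hx
    by_cases h : ε < η
    · rw [hcov_eq ε hε h] at hx
      have : x = ε := by rw [hx]; ring
      linarith
    · push_neg at h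
      have hd : |p - q| ≤ ε := by rw [← hpqeq]; exact h
      have hcov := cov_le_card_sub_one ε S p q hp hq hpq hd
      have hcov' : (coveringNumber ε (S : Set ℝ) : ℝ) ≤ (S.card : ℝ) - 1 := by
        have h1 : (coveringNumber ε (S : Set ℝ) : ℝ) ≤ ((S.card - 1 : ℕ) : ℝ) := by
          exact_mod_cast hcov
        have h2 : ((S.card - 1 : ℕ) : ℝ) = (S.card : ℝ) - 1 := by
          have : 1 ≤ S.card := by omega
          push_cast [this]; ring
        linarith
      have : x ≤ 0 := by
        rw [hx]
        apply mul_nonpos_of_nonneg_of_nonpos hε.le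
        linarith
      linarith
  have hbdd : BddAbove T := ⟨η, hub⟩
  have hmemT : ∀ ε : ℝ, 0 < ε → ε < η → ε ∈ T := by
    intro ε hε hεη
    refine ⟨ε, hε, ?_⟩
    rw [hM, hcov_eq ε hε hεη]; ring
  have hTne : T.Nonempty := ⟨η / 2, hmemT _ (by linarith) (by linarith)⟩
  have hle : sSup T ≤ η := csSup_le hTne hub
  have hge : η ≤ sSup T := by
    refine le_of_forall_lt fun y hy => ?_
    set ε := (max y 0 + η) / 2 with hε
    have h1 : 0 ≤ max y 0 := le_max_right _ _
    have h2 : max y 0 < η := max_lt hy hηpos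
    have hε1 : 0 < ε := by rw [hε]; linarith
    have hε2 : ε < η := by rw [hε]; linarith
    have hyε : y < ε := by
      have : y ≤ max y 0 := le_max_left _ _
      rw [hε]; linarith
    exact lt_of_lt_of_le hyε (le_csSup hbdd (hmemT ε hε1 hε2))
  have : sSup T = η := le_antisymm hle hge
  rw [metricSpan, ← hT, this, max_eq_right hηpos.le]
end
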